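/- arXiv:2505.20799 — 2 statements merged into one kernel-verified Lean document; each statement's English description precedes it below -/
import Mathlib

section
/- For any real numbers a_1,…,a_n, any p_1,…,p_n ∈ [0,1], and any real r ≥ 3, one has (Σ_i p_i |a_i|^r)^{1/r} ≤ e^6 max_i |a_i| + e^{−r} (Σ_i p_i a_i²)^{1/2}. -/
open Real

/-! With `M = max |aᵢ|` and `S² = ∑ pᵢ aᵢ²`, the pointwise bound `|aᵢ|^r ≤ M^(r-2) aᵢ²` gives
`(∑ pᵢ |aᵢ|^r)^(1/r) ≤ M^(1-2/r) S^(2/r)`. Writing the right side as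
`(e⁶ M)^(1-2/r) (e^(-3(r-2)) S)^(2/r)` (the exponentials cancel) and applying Young's inequality
with weights `1 - 2/r` and `2/r` bounds it by `e⁶ M + e^(-3(r-2)) S ≤ e⁶ M + e^(-r) S` for `r ≥ 3`. -/

lemma rpow_eq_rpow_sub_two_mul_sq {x : ℝ} (hx : 0 ≤ x) {r : ℝ} (hr : r ≠ 0) :
    x ^ r = x ^ (r - 2) * x ^ 2 := by
  rw [← rpow_two, ← rpow_add' hx (by simpa using hr), sub_add_cancel]

lemma Finset.sum_mul_abs_rpow_le {ι : Type*} (s : Finset ι) {w a : ι → ℝ} {M r : ℝ}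
    (hw : ∀ i ∈ s, 0 ≤ w i) (ha : ∀ i ∈ s, |a i| ≤ M) (hr : 2 ≤ r) :
    ∑ i ∈ s, w i * |a i| ^ r ≤ M ^ (r - 2) * ∑ i ∈ s, w i * a i ^ 2 := by
  rw [Finset.mul_sum]
  refine Finset.sum_le_sum fun i hi => ?_
  calc w i * |a i| ^ r = |a i| ^ (r - 2) * (w i * a i ^ 2) := by
        rw [rpow_eq_rpow_sub_two_mul_sq (abs_nonneg _) (by linarith), sq_abs]; ring
    _ ≤ M ^ (r - 2) * (w i * a i ^ 2) :=
        mul_le_mul_of_nonneg_right (rpow_le_rpow (abs_nonneg _) (ha i hi) (by linarith))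
          (mul_nonneg (hw i hi) (sq_nonneg _))

lemma rpow_sub_two_mul_sq_rpow_one_div_le {M S r : ℝ} (hM : 0 ≤ M) (hS : 0 ≤ S) (hr : 3 ≤ r) :
    (M ^ (r - 2) * S ^ 2) ^ (1 / r) ≤ exp 6 * M + exp (-r) * S := by
  have hr0 : 0 < r := by linarith
  have hsplit : (M ^ (r - 2) * S ^ 2) ^ (1 / r) =
      (exp 6 * M) ^ ((r - 2) / r) * (exp (-3 * (r - 2)) * S) ^ (2 / r) := by
    rw [mul_rpow (by positivity) (by positivity), mul_rpow (by positivity) hM,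
      mul_rpow (by positivity) hS, ← rpow_natCast, Nat.cast_ofNat, ← rpow_mul hM, ← rpow_mul hS,
      ← exp_mul, ← exp_mul]
    have : exp (6 * ((r - 2) / r)) * exp (-3 * (r - 2) * (2 / r)) = 1 := by
      rw [← exp_add, ← exp_zero]; congr 1; field_simp; ring
    calc _ = M ^ ((r - 2) / r) * S ^ (2 / r) := by congr 2 <;> field_simp
      _ = _ := by linear_combination (-(M ^ ((r - 2) / r) * S ^ (2 / r))) * this
  have hyoung := geom_mean_le_arith_mean2_weighted (w₁ := (r - 2) / r) (w₂ := 2 / r)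
    (by bound) (by positivity) (by positivity : 0 ≤ exp 6 * M)
    (by positivity : 0 ≤ exp (-3 * (r - 2)) * S) (by field_simp; ring)
  have hw₁ : (r - 2) / r ≤ 1 := by rw [div_le_one hr0]; linarith
  have hw₂ : 2 / r ≤ 1 := by rw [div_le_one hr0]; linarith
  rw [hsplit]
  refine hyoung.trans (add_le_add ?_ ?_)
  · exact mul_le_of_le_one_left (by positivity) hw₁
  · exact (mul_le_of_le_one_left (by positivity) hw₂).trans (by gcongr; linarith)

theorem stmt1 (n : ℕ) (a p : Fin n → ℝ) (hp : ∀ i, p i ∈ Set.Icc (0:ℝ) 1)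
    (r : ℝ) (hr : 3 ≤ r) :
    (∑ i, p i * |a i| ^ r) ^ (1 / r) ≤
      Real.exp 6 * (⨆ i, |a i|) +
        Real.exp (-r) * Real.sqrt (∑ i, p i * (a i) ^ 2) := by
  set M := ⨆ i, |a i|
  have hM : 0 ≤ M := Real.iSup_nonneg fun i => abs_nonneg _
  have hsq : 0 ≤ ∑ i, p i * a i ^ 2 :=
    Finset.sum_nonneg fun i _ => mul_nonneg (hp i).1 (sq_nonneg _)
  have hinterp := Finset.univ.sum_mul_abs_rpow_le (M := M) (fun i _ => (hp i).1)
    (fun i _ => le_ciSup (f := fun j => |a j|) (Set.finite_range _).bddAbove i)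
    (by linarith : 2 ≤ r)
  rw [← sq_sqrt hsq] at hinterp
  calc (∑ i, p i * |a i| ^ r) ^ (1 / r)
      ≤ (M ^ (r - 2) * sqrt (∑ i, p i * a i ^ 2) ^ 2) ^ (1 / r) := by
        gcongr
        exact Finset.sum_nonneg fun i _ => mul_nonneg (hp i).1 (by positivity)
    _ ≤ _ := rpow_sub_two_mul_sq_rpow_one_div_le hM (sqrt_nonneg _) hr
end

section
/- Suppose (z_i)_{i=1}^n are reals with Σ_i min(|z_i|^α, z_i²) ≤ r for some 1 ≤ α ≤ 2 and r ≥ 1, and (y_{ij}) is an n×n array with max_i Σ_j y_{ij}² ≤ 1. Then for any n×n matrix A, |Σ_{i,j} a_{ij} z_i y_{ij}| ≤ r^{1/2} ‖A‖_F + r max_i (Σ_j a_{ij}²)^{1/2}. -/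
/-!
Cauchy–Schwarz in each row bounds the sum by `∑ i, |z i| * ‖A i‖`. Split the rows according to
whether `|z i| ≤ 1`. On the small entries `min (|z|^α) (z^2) = z^2`, so `∑ z i ^ 2 ≤ r` and a second
Cauchy–Schwarz gives `√r * ‖A‖_F`; on the large ones `min (|z|^α) (z^2) ≥ |z|`, so
`∑ |z i| ≤ r` and each row norm is at most the largest one.
-/

open Finset Real

lemma abs_sum_mul_le_sqrt_of_sum_sq_le_one {ι : Type*} (s : Finset ι) (a y : ι → ℝ)
    (hy : ∑ j ∈ s, y j ^ 2 ≤ 1) :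
    |∑ j ∈ s, a j * y j| ≤ √(∑ j ∈ s, a j ^ 2) :=
  abs_le_sqrt <| calc
    (∑ j ∈ s, a j * y j) ^ 2 ≤ (∑ j ∈ s, a j ^ 2) * ∑ j ∈ s, y j ^ 2 :=
      sum_mul_sq_le_sq_mul_sq s a y
    _ ≤ ∑ j ∈ s, a j ^ 2 :=
      mul_le_of_le_one_right (sum_nonneg fun j _ => sq_nonneg (a j)) hy

lemma sq_le_min_rpow_sq {x α : ℝ} (hα : α ≤ 2) (hx : |x| ≤ 1) :
    x ^ 2 ≤ min (|x| ^ α) (x ^ 2) := by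
  refine le_min ?_ le_rfl
  calc x ^ 2 = |x| ^ (2 : ℝ) := by rw [rpow_two, sq_abs]
    _ ≤ |x| ^ α := by
      by_cases hx0 : x = 0
      · simpa [hx0] using rpow_nonneg le_rfl α
      · exact rpow_le_rpow_of_exponent_ge (abs_pos.2 hx0) hx hα

lemma abs_le_min_rpow_sq {x α : ℝ} (hα : 1 ≤ α) (hx : 1 ≤ |x|) :
    |x| ≤ min (|x| ^ α) (x ^ 2) := by
  refine le_min ?_ ?_
  · simpa using rpow_le_rpow_of_exponent_le hx hα
  · rw [← sq_abs]
    nlinarith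

theorem sum_abs_mul_le_of_sum_min_rpow_sq_le {ι : Type*} [Fintype ι] {α r : ℝ}
    (hα1 : 1 ≤ α) (hα2 : α ≤ 2) {z w : ι → ℝ} (hw : ∀ i, 0 ≤ w i)
    (hz : ∑ i, min (|z i| ^ α) (z i ^ 2) ≤ r) :
    ∑ i, |z i| * w i ≤ √r * √(∑ i, w i ^ 2) + r * ⨆ i, w i := by
  classical
  have hmin_nonneg : ∀ i, 0 ≤ min (|z i| ^ α) (z i ^ 2) :=
    fun i => le_min (rpow_nonneg (abs_nonneg _) _) (sq_nonneg _)
  have hsub : ∀ s : Finset ι, ∑ i ∈ s, min (|z i| ^ α) (z i ^ 2) ≤ r :=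
    fun s => (sum_le_univ_sum_of_nonneg hmin_nonneg).trans hz
  set small := univ.filter fun i => |z i| ≤ 1
  have hsmall : ∑ i ∈ small, |z i| * w i ≤ √r * √(∑ i, w i ^ 2) := by
    refine (sum_mul_le_sqrt_mul_sqrt small _ w).trans <|
      mul_le_mul (sqrt_le_sqrt ?_) (sqrt_le_sqrt ?_) (sqrt_nonneg _) (sqrt_nonneg _)
    · calc ∑ i ∈ small, |z i| ^ 2 ≤ ∑ i ∈ small, min (|z i| ^ α) (z i ^ 2) :=
            sum_le_sum fun i hi => sq_abs (z i) ▸ sq_le_min_rpow_sq hα2 (mem_filter.1 hi).2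
        _ ≤ r := hsub small
    · exact sum_le_univ_sum_of_nonneg fun i => sq_nonneg _
  have hlarge : ∑ i ∈ smallᶜ, |z i| * w i ≤ r * ⨆ i, w i := by
    have hbdd : BddAbove (Set.range w) := (Set.finite_range w).bddAbove
    calc ∑ i ∈ smallᶜ, |z i| * w i ≤ ∑ i ∈ smallᶜ, |z i| * ⨆ i, w i :=
          sum_le_sum fun i _ => mul_le_mul_of_nonneg_left (le_ciSup hbdd i) (abs_nonneg _)
      _ = (∑ i ∈ smallᶜ, |z i|) * ⨆ i, w i := (sum_mul _ _ _).symm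
      _ ≤ r * ⨆ i, w i := by
          refine mul_le_mul_of_nonneg_right ?_ (iSup_nonneg hw)
          calc ∑ i ∈ smallᶜ, |z i| ≤ ∑ i ∈ smallᶜ, min (|z i| ^ α) (z i ^ 2) :=
                sum_le_sum fun i hi => abs_le_min_rpow_sq hα1 <|
                  (not_le.1 <| by simpa [small] using hi).le
            _ ≤ r := hsub smallᶜ
  calc ∑ i, |z i| * w i = ∑ i ∈ small, |z i| * w i + ∑ i ∈ smallᶜ, |z i| * w i :=
        (sum_add_sum_compl small _).symm
    _ ≤ _ := add_le_add hsmall hlarge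

theorem stmt10_general (n : ℕ) (A : Matrix (Fin n) (Fin n) ℝ) (α r : ℝ)
    (hα1 : 1 ≤ α) (hα2 : α ≤ 2)
    (z : Fin n → ℝ) (y : Fin n → Fin n → ℝ)
    (hz : ∑ i, min (|z i| ^ α) ((z i) ^ 2) ≤ r)
    (hy : ∀ i, ∑ j, (y i j) ^ 2 ≤ 1) :
    |∑ i, ∑ j, A i j * z i * y i j| ≤
      r ^ ((1:ℝ) / 2) * Real.sqrt (∑ i, ∑ j, (A i j) ^ 2) +
        r * (⨆ i, Real.sqrt (∑ j, (A i j) ^ 2)) := by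
  set rowNorm : Fin n → ℝ := fun i => √(∑ j, A i j ^ 2)
  have hrow : ∀ i, |∑ j, A i j * z i * y i j| ≤ |z i| * rowNorm i := fun i => by
    calc |∑ j, A i j * z i * y i j| = |z i| * |∑ j, A i j * y i j| := by
          rw [← abs_mul, mul_sum]; congr 1; exact sum_congr rfl fun j _ => by ring
      _ ≤ |z i| * rowNorm i := mul_le_mul_of_nonneg_left
          (abs_sum_mul_le_sqrt_of_sum_sq_le_one _ _ _ (hy i)) (abs_nonneg _)
  have hrowNorm_sq : ∑ i, rowNorm i ^ 2 = ∑ i, ∑ j, A i j ^ 2 :=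
    sum_congr rfl fun i _ => sq_sqrt (sum_nonneg fun j _ => sq_nonneg _)
  rw [← sqrt_eq_rpow, ← hrowNorm_sq]
  calc |∑ i, ∑ j, A i j * z i * y i j| ≤ ∑ i, |z i| * rowNorm i :=
        (abs_sum_le_sum_abs _ _).trans (sum_le_sum fun i _ => hrow i)
    _ ≤ _ := sum_abs_mul_le_of_sum_min_rpow_sq_le hα1 hα2 (fun i => sqrt_nonneg _) hz

theorem stmt10 (n : ℕ) (A : Matrix (Fin n) (Fin n) ℝ) (α r : ℝ)
    (hα1 : 1 ≤ α) (hα2 : α ≤ 2) (hr : 1 ≤ r)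
    (z : Fin n → ℝ) (y : Fin n → Fin n → ℝ)
    (hz : ∑ i, min (|z i| ^ α) ((z i) ^ 2) ≤ r)
    (hy : ∀ i, ∑ j, (y i j) ^ 2 ≤ 1) :
    |∑ i, ∑ j, A i j * z i * y i j| ≤
      r ^ ((1:ℝ) / 2) * Real.sqrt (∑ i, ∑ j, (A i j) ^ 2) +
        r * (⨆ i, Real.sqrt (∑ j, (A i j) ^ 2)) :=
  stmt10_general n A α r hα1 hα2 z y hz hy
end
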